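/- arXiv:2410.00664 — 6 statements merged into one kernel-verified Lean document; each statement's English description precedes it below -/
import Mathlib

section
/- Let λ > 0, λ̇ ∈ ℝ, α > 0, N > 0, and set C = λ̇/(αλN), B = arctan(C). Then the function s(t) = α^{-1}(π/2 - arctan((λ + λ̇ t)/(αλN t))), extended by s(0) = 0, satisfies the initial value problem s(0) = 0 and s'(t) = cos^2(αs(t) + B) · sqrt(λ̇^2 + (αλN)^2)/(αλ cos B) for t > 0. -/
open Real

/-! Write `u = (λ + λ̇ t) / (αλN t)` and `C = λ̇ / (αλN)`. Then `α s(t) + B = π/2 - (arctan u - arctan C)`,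
so the cosine on the right is `sin (arctan u - arctan C)`, whose square is
`(u - C)² / ((1 + u²)(1 + C²))`. Since `√(λ̇² + (αλN)²) / cos B = αλN (1 + C²)`, both sides of the
differential equation become the same rational function of `t`. -/

theorem deriv_ite_eq_of_ne {𝕜 F : Type*} [NontriviallyNormedField 𝕜] [DecidableEq 𝕜]
    [NormedAddCommGroup F] [NormedSpace 𝕜 F] {f : 𝕜 → F} {c x : 𝕜} (y : F) (hx : x ≠ c) :
    deriv (fun t => if t = c then y else f t) x = deriv f x := by
  refine Filter.EventuallyEq.deriv_eq ?_
  filter_upwards [eventually_ne_nhds hx] with t ht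
  rw [if_neg ht]

theorem hasDerivAt_arctan_add_mul_div_mul (p q : ℝ) {r t : ℝ} (hr : r ≠ 0) (ht : t ≠ 0) :
    HasDerivAt (fun t => arctan ((p + q * t) / (r * t)))
      (-(p * r) / ((r * t) ^ 2 + (p + q * t) ^ 2)) t := by
  have hquot : HasDerivAt (fun t => (p + q * t) / (r * t)) (-(p * r) / (r * t) ^ 2) t :=
    ((((hasDerivAt_id' t).const_mul q).const_add p).fun_div
      ((hasDerivAt_id' t).const_mul r) (mul_ne_zero hr ht)).congr_deriv (by ring)
  have hD : (r * t) ^ 2 + (p + q * t) ^ 2 ≠ 0 := by positivity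
  convert hquot.arctan using 1
  field_simp

theorem sin_arctan_sub_arctan_sq (x y : ℝ) :
    sin (arctan x - arctan y) ^ 2 = (x - y) ^ 2 / ((1 + x ^ 2) * (1 + y ^ 2)) := by
  rw [sin_sub, sin_arctan, sin_arctan, cos_arctan, cos_arctan]
  field_simp
  rw [sq_sqrt (by positivity), sq_sqrt (by positivity)]

theorem sqrt_sq_add_sq_div_cos_arctan_div (b : ℝ) {a : ℝ} (ha : 0 < a) :
    √(b ^ 2 + a ^ 2) / cos (arctan (b / a)) = (b ^ 2 + a ^ 2) / a := by
  have hsqrt : √(1 + (b / a) ^ 2) = √(b ^ 2 + a ^ 2) / a := by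
    rw [← sqrt_sq ha.le, ← sqrt_div' _ (sq_nonneg a), sqrt_sq ha.le]
    congr 1
    field_simp
    ring
  rw [cos_arctan, hsqrt, div_div_eq_mul_div, div_one, ← mul_div_assoc,
    mul_self_sqrt (by positivity)]

/-- The reparameterization `s(t)` from unit-spherical-speed to constant-speed geodesics
solves the initial value problem
`s(0) = 0`, `s'(t) = cos²(α s(t) + B) · √(λ̇² + (αλN)²) / (αλ cos B)` for `t > 0`,
where `B = arctan(λ̇ / (αλN))`. -/
theorem reparameterization_IVP (lam dlam α N : ℝ) (hlam : 0 < lam) (hα : 0 < α) (hN : 0 < N) :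
    (fun t : ℝ => if t = 0 then 0
        else α⁻¹ * (π / 2 - Real.arctan ((lam + dlam * t) / (α * lam * N * t)))) 0 = 0 ∧
    ∀ t : ℝ, 0 < t →
      deriv (fun t : ℝ => if t = 0 then 0
          else α⁻¹ * (π / 2 - Real.arctan ((lam + dlam * t) / (α * lam * N * t)))) t =
        Real.cos (α * ((fun t : ℝ => if t = 0 then 0
            else α⁻¹ * (π / 2 - Real.arctan ((lam + dlam * t) / (α * lam * N * t)))) t)
          + Real.arctan (dlam / (α * lam * N))) ^ 2
        * Real.sqrt (dlam ^ 2 + (α * lam * N) ^ 2)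
        / (α * lam * Real.cos (Real.arctan (dlam / (α * lam * N)))) := by
  set a := α * lam * N
  have ha : 0 < a := by positivity
  refine ⟨if_pos rfl, fun t ht => ?_⟩
  have hs := ((hasDerivAt_arctan_add_mul_div_mul lam dlam ha.ne' ht.ne').const_sub
    (π / 2)).const_mul α⁻¹
  have hangle : ∀ x y, π / 2 - x + y = π / 2 - (x - y) := fun x y => by ring
  dsimp only
  rw [deriv_ite_eq_of_ne 0 ht.ne', hs.deriv, if_neg ht.ne', mul_inv_cancel_left₀ hα.ne',
    hangle, cos_pi_div_two_sub, sin_arctan_sub_arctan_sq, mul_div_assoc,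
    div_mul_eq_div_div_swap (√_), sqrt_sq_add_sq_div_cos_arctan_div dlam ha]
  field_simp
  ring
end

section
/- Let 0 < αM < π and λ, μ > 0, and set B = arctan(cot(αM) - (λ/μ)/sin(αM)). Then -π/2 < B + αM < π/2, and consequently μ(s) = λ cos(B)/cos(αs + B) is positive for all 0 ≤ s ≤ M. -/
open Real

/-- For α-compatible radii the radial component of the connecting geodesic stays positive:
with `B = arctan(cot(αM) - (λ/μ)/sin(αM))` we have `-π/2 < B + αM < π/2` and
`μ(s) = λ cos B / cos(α s + B) > 0` for all `0 ≤ s ≤ M`. -/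
theorem radial_positive (lam mu α M : ℝ) (hlam : 0 < lam) (hmu : 0 < mu)
    (h0 : 0 < α * M) (hπ : α * M < π) :
    (-(π / 2) < Real.arctan (Real.cot (α * M) - (lam / mu) / Real.sin (α * M)) + α * M ∧
      Real.arctan (Real.cot (α * M) - (lam / mu) / Real.sin (α * M)) + α * M < π / 2) ∧
    ∀ s : ℝ, 0 ≤ s → s ≤ M →
      0 < lam * Real.cos (Real.arctan (Real.cot (α * M) - (lam / mu) / Real.sin (α * M))) /
        Real.cos (α * s + Real.arctan (Real.cot (α * M) - (lam / mu) / Real.sin (α * M))) := by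
  set B := Real.arctan (Real.cot (α * M) - (lam / mu) / Real.sin (α * M)) with hB
  have hsin : 0 < Real.sin (α * M) := Real.sin_pos_of_pos_of_lt_pi h0 hπ
  have hcot : Real.cot (α * M) = Real.tan (π / 2 - α * M) := by
    rw [Real.tan_pi_div_two_sub, Real.cot_eq_cos_div_sin, Real.tan_eq_sin_div_cos, inv_div]
  have hBlb : -(π / 2) < B := Real.neg_pi_div_two_lt_arctan _
  have hBub : B < π / 2 - α * M := by
    have h1 : Real.cot (α * M) - (lam / mu) / Real.sin (α * M) < Real.cot (α * M) := by
      have : 0 < (lam / mu) / Real.sin (α * M) := div_pos (div_pos hlam hmu) hsin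
      linarith
    calc B < Real.arctan (Real.cot (α * M)) := Real.arctan_strictMono h1
      _ = π / 2 - α * M := by
          rw [hcot, Real.arctan_tan (by linarith) (by linarith)]
  constructor
  · constructor <;> linarith
  · intro s hs hsM
    have hM : 0 < M := by
      rcases lt_trichotomy M 0 with h | h | h
      · linarith
      · simp [h] at h0
      · exact h
    have hα : 0 < α := by nlinarith
    have h1 : α * s ≤ α * M := by nlinarith
    have h2 : 0 ≤ α * s := by positivity
    have hc1 : 0 < Real.cos B := Real.cos_pos_of_mem_Ioo ⟨hBlb, by linarith⟩
    have hc2 : 0 < Real.cos (α * s + B) :=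
      Real.cos_pos_of_mem_Ioo ⟨by linarith, by linarith⟩
    positivity
end

section
/- Let 0 < αM < π and λ, μ > 0, and set B = arctan((cos(αM) - λ/μ)/sin(αM)). Then λ cos(B)(tan(B + αM) - tan(B)) = sqrt(λ^2 - 2λμ cos(αM) + μ^2). -/
open Real

/-- Simplification of the arc-length of the warped geodesic between radii λ and μ with
warped spherical distance αM, yielding the law-of-cosines distance formula. -/
theorem arclength_eq_law_of_cosines (lam mu α M : ℝ) (hlam : 0 < lam) (hmu : 0 < mu)
    (h0 : 0 < α * M) (hπ : α * M < π) :
    lam * Real.cos (Real.arctan ((Real.cos (α * M) - lam / mu) / Real.sin (α * M)))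
      * (Real.tan (Real.arctan ((Real.cos (α * M) - lam / mu) / Real.sin (α * M)) + α * M)
        - Real.tan (Real.arctan ((Real.cos (α * M) - lam / mu) / Real.sin (α * M)))) =
    Real.sqrt (lam ^ 2 - 2 * lam * mu * Real.cos (α * M) + mu ^ 2) := by
  have hs : 0 < Real.sin (α * M) := Real.sin_pos_of_pos_of_lt_pi h0 hπ
  obtain ⟨t, htdef⟩ : ∃ t, (Real.cos (α * M) - lam / mu) / Real.sin (α * M) = t := ⟨_, rfl⟩
  rw [htdef]
  set θ := α * M with hθ
  have ht : t * Real.sin θ = Real.cos θ - lam / mu := by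
    rw [← htdef]; exact div_mul_cancel₀ _ hs.ne'
  have hP : (0:ℝ) < 1 + t ^ 2 := by positivity
  have hsq : 0 < Real.sqrt (1 + t ^ 2) := Real.sqrt_pos.mpr hP
  have hsqsq : Real.sqrt (1 + t ^ 2) * Real.sqrt (1 + t ^ 2) = 1 + t ^ 2 :=
    Real.mul_self_sqrt hP.le
  have hcosB : Real.cos (Real.arctan t) = 1 / Real.sqrt (1 + t ^ 2) := Real.cos_arctan t
  have hsinB : Real.sin (Real.arctan t) = t / Real.sqrt (1 + t ^ 2) := Real.sin_arctan t
  have hdiff : Real.cos θ - t * Real.sin θ = lam / mu := by linarith [ht]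
  have hcadd : Real.cos (Real.arctan t + θ) = (lam / mu) / Real.sqrt (1 + t ^ 2) := by
    rw [Real.cos_add, hcosB, hsinB, div_mul_eq_mul_div, div_mul_eq_mul_div, one_mul,
      div_sub_div_same, hdiff]
  have hsadd : Real.sin (Real.arctan t + θ)
      = (Real.sin θ + t * Real.cos θ) / Real.sqrt (1 + t ^ 2) := by
    rw [Real.sin_add, hcosB, hsinB]
    field_simp
    ring
  have htan : Real.tan (Real.arctan t + θ) = (Real.sin θ + t * Real.cos θ) * mu / lam := by
    rw [Real.tan_eq_sin_div_cos, hsadd, hcadd]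
    field_simp [hmu.ne', hlam.ne']
  have key : lam * Real.cos (Real.arctan t)
      * (Real.tan (Real.arctan t + θ) - Real.tan (Real.arctan t))
      = mu * Real.sin θ * Real.sqrt (1 + t ^ 2) := by
    rw [hcosB, htan, Real.tan_arctan]
    have h3 : Real.cos θ * mu - lam = t * Real.sin θ * mu := by
      have := hdiff
      field_simp at this
      linarith [this]
    have e1 : lam * (1 / Real.sqrt (1 + t ^ 2))
        * ((Real.sin θ + t * Real.cos θ) * mu / lam - t)
        = ((Real.sin θ + t * Real.cos θ) * mu - t * lam) / Real.sqrt (1 + t ^ 2) := by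
      field_simp
    have hnum : (Real.sin θ + t * Real.cos θ) * mu - t * lam
        = mu * Real.sin θ * (Real.sqrt (1 + t ^ 2) * Real.sqrt (1 + t ^ 2)) := by
      rw [hsqsq]
      linear_combination t * h3
    rw [e1, hnum, mul_div_assoc, mul_div_cancel_right₀ _ hsq.ne']
  rw [key]
  have hts : mu * Real.sin θ * t = mu * Real.cos θ - lam := by
    have h4 : t * Real.sin θ * mu = Real.cos θ * mu - lam / mu * mu := by
      rw [ht]; ring
    rw [div_mul_cancel₀ _ hmu.ne'] at h4
    linarith [h4]
  have hpyth : Real.sin θ ^ 2 + Real.cos θ ^ 2 = 1 := Real.sin_sq_add_cos_sq θ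
  have hside : lam ^ 2 - 2 * lam * mu * Real.cos θ + mu ^ 2
      = (mu * Real.sin θ * Real.sqrt (1 + t ^ 2)) ^ 2 := by
    have h5 : (mu * Real.sin θ * Real.sqrt (1 + t ^ 2)) ^ 2
        = (mu * Real.sin θ) ^ 2 * (1 + t ^ 2) := by
      rw [mul_pow, Real.sq_sqrt hP.le]
    rw [h5]
    linear_combination (-(mu * Real.sin θ * t + (mu * Real.cos θ - lam))) * hts
      + (-(mu ^ 2)) * hpyth
  rw [hside, Real.sqrt_sq (by positivity)]
end

section
/- Let u ∈ S^{n-1} ⊂ ℝ^n, and u̇, v̇ ∈ ℝ^n with ⟨u, u̇⟩ = ⟨u, v̇⟩ = 0, and k ≥ 1. With ν_k as above, ⟨ν_k(u̇), ν_k(v̇)⟩ = k ⟨u̇, v̇⟩. -/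
open Finset

/-- `⟨ν_k(u̇), ν_k(v̇)⟩ = k ⟨u̇, v̇⟩` for tangent vectors `u̇, v̇ ⟂ u`, `‖u‖ = 1`.
Tensors of order k are modeled as functions `(Fin k → Fin n) → ℝ` with the
entrywise (Euclidean) inner product. -/
theorem nu_inner_nu (n k : ℕ) (hk : 1 ≤ k) (u du dv : Fin n → ℝ)
    (hu : ∑ j, u j ^ 2 = 1) (horthu : ∑ j, u j * du j = 0) (horthv : ∑ j, u j * dv j = 0) :
    ∑ f : Fin k → Fin n,
        (∑ j : Fin k, ∏ i : Fin k, (if i = j then du (f i) else u (f i)))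
          * (∑ j : Fin k, ∏ i : Fin k, (if i = j then dv (f i) else u (f i)))
      = k * ∑ j, du j * dv j := by
  have key : ∀ j j' : Fin k,
      (∑ f : Fin k → Fin n, (∏ i : Fin k, (if i = j then du (f i) else u (f i))) *
        ∏ i : Fin k, (if i = j' then dv (f i) else u (f i)))
      = if j = j' then ∑ x, du x * dv x else 0 := by
    intro j j'
    have h1 : ∀ f : Fin k → Fin n,
        (∏ i : Fin k, (if i = j then du (f i) else u (f i))) *
          ∏ i : Fin k, (if i = j' then dv (f i) else u (f i))
        = ∏ i : Fin k, ((if i = j then du (f i) else u (f i)) *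
            (if i = j' then dv (f i) else u (f i))) := fun f =>
      (Finset.prod_mul_distrib).symm
    simp_rw [h1]
    rw [← Fintype.piFinset_univ, Finset.sum_prod_piFinset univ
      (fun i x => (if i = j then du x else u x) * (if i = j' then dv x else u x))]
    by_cases h : j = j'
    · subst h
      simp only [if_pos rfl]
      have hfac : ∀ i : Fin k,
          (∑ x, (if i = j then du x else u x) * (if i = j then dv x else u x))
          = if i = j then ∑ x, du x * dv x else 1 := by
        intro i
        by_cases hi : i = j
        · simp [hi]
        · simpa [hi, ← sq] using hu
      calc ∏ i : Fin k, ∑ x, (if i = j then du x else u x) * (if i = j then dv x else u x)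
          = ∏ i : Fin k, (if i = j then ∑ x, du x * dv x else 1) :=
            Finset.prod_congr rfl fun i _ => hfac i
        _ = ∑ x, du x * dv x := by simp
    · rw [if_neg h]
      apply Finset.prod_eq_zero (Finset.mem_univ j)
      simp only [if_pos rfl, if_neg h]
      rw [← horthu]
      exact Finset.sum_congr rfl fun x _ => mul_comm _ _
  calc ∑ f : Fin k → Fin n,
        (∑ j : Fin k, ∏ i : Fin k, (if i = j then du (f i) else u (f i)))
          * (∑ j : Fin k, ∏ i : Fin k, (if i = j then dv (f i) else u (f i)))
      = ∑ j : Fin k, ∑ j' : Fin k, ∑ f : Fin k → Fin n,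
          (∏ i : Fin k, (if i = j then du (f i) else u (f i))) *
            ∏ i : Fin k, (if i = j' then dv (f i) else u (f i)) := by
        simp_rw [Finset.sum_mul_sum]
        rw [Finset.sum_comm]
        exact Finset.sum_congr rfl fun j _ => Finset.sum_comm
    _ = ∑ j : Fin k, ∑ j' : Fin k, (if j = j' then ∑ x, du x * dv x else 0) :=
        Finset.sum_congr rfl fun j _ => Finset.sum_congr rfl fun j' _ => key j j'
    _ = k * ∑ x, du x * dv x := by
        simp [Finset.sum_ite_eq, Finset.card_univ]
end

section
/- Let Δ_1, …, Δ_d ∈ ℝ be nonzero and let (ς_1,…,ς_d) ∈ {-1,1}^d maximize f(σ) = Σ σ_i Δ_i subject to Π σ_i = 1. Then ς differs from the unconstrained optimizer σ_i = sign(Δ_i) in at most one index. -/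
open Finset

/-!
If the maximizer `ς` disagreed with `sign Δ` at two indices `i ≠ j`, then `ς_i Δ_i` and
`ς_j Δ_j` would both be negative. Flipping both signs keeps `∏ σ_i = 1` and raises `f` by
`-2 (ς_i Δ_i + ς_j Δ_j) > 0`, contradicting maximality.
-/

lemma mul_neg_of_ne_sign {Δ s : ℝ} (hΔ : Δ ≠ 0) (hs : s = 1 ∨ s = -1)
    (h : s ≠ if 0 ≤ Δ then 1 else -1) : s * Δ < 0 := by
  rcases hs with rfl | rfl <;> split_ifs at h with h0
  · exact absurd rfl h
  · linarith
  · have : 0 < Δ := lt_of_le_of_ne h0 hΔ.symm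
    linarith
  · exact absurd rfl h

section FlipPair

variable {ι R : Type*} [DecidableEq ι] [CommRing R]

def flipPair (σ : ι → R) (i j : ι) : ι → R :=
  fun k => if k = i ∨ k = j then -σ k else σ k

lemma flipPair_eq_one_or_neg_one {σ : ι → R} (hσ : ∀ k, σ k = 1 ∨ σ k = -1) (i j k : ι) :
    flipPair σ i j k = 1 ∨ flipPair σ i j k = -1 := by
  unfold flipPair
  split_ifs
  · rcases hσ k with h | h <;> simp [h]
  · exact hσ k

lemma prod_flipPair [Fintype ι] (σ : ι → R) {i j : ι} (hij : i ≠ j) :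
    ∏ k, flipPair σ i j k = ∏ k, σ k := by
  have : ∀ k, flipPair σ i j k = (if k ∈ ({i, j} : Finset ι) then -1 else 1) * σ k := by
    intro k; by_cases hk : k = i ∨ k = j <;> simp [flipPair, hk]
  rw [prod_congr rfl fun k _ => this k, prod_mul_distrib, prod_ite_mem, univ_inter,
    prod_pair hij]
  simp

lemma sum_flipPair_mul [Fintype ι] (σ Δ : ι → R) {i j : ι} (hij : i ≠ j) :
    ∑ k, flipPair σ i j k * Δ k = ∑ k, σ k * Δ k - 2 * (σ i * Δ i + σ j * Δ j) := by
  have hdiff : ∑ k, (σ k * Δ k - flipPair σ i j k * Δ k) = 2 * σ i * Δ i + 2 * σ j * Δ j := by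
    rw [sum_eq_add_of_mem i j (mem_univ i) (mem_univ j) hij fun k _ hk => by
      simp [flipPair, hk.1, hk.2]]
    simp only [flipPair, true_or, or_true, if_true]
    ring
  rw [sum_sub_distrib] at hdiff
  linear_combination -hdiff

end FlipPair

/-- A constrained maximizer `ς` of `f(σ) = Σ σ_i Δ_i` over `σ ∈ {-1,1}^d` with
`Π σ_i = 1` (all `Δ_i ≠ 0`) differs from the unconstrained optimizer
`σ_i = sign Δ_i` in at most one index. -/
theorem maximizer_close_to_sign (d : ℕ) (Δ : Fin d → ℝ) (hΔ : ∀ i, Δ i ≠ 0)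
    (ς : Fin d → ℝ) (hς : ∀ i, ς i = 1 ∨ ς i = -1) (hprod : (∏ i, ς i) = 1)
    (hmax : ∀ σ : Fin d → ℝ, (∀ i, σ i = 1 ∨ σ i = -1) → (∏ i, σ i) = 1 →
      ∑ i, σ i * Δ i ≤ ∑ i, ς i * Δ i) :
    (Finset.univ.filter
        (fun i => ς i ≠ (if 0 ≤ Δ i then (1 : ℝ) else -1))).card ≤ 1 := by
  by_contra! h
  obtain ⟨i, hi, j, hj, hij⟩ := one_lt_card.mp h
  rw [mem_filter] at hi hj
  have hi_neg := mul_neg_of_ne_sign (hΔ i) (hς i) hi.2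
  have hj_neg := mul_neg_of_ne_sign (hΔ j) (hς j) hj.2
  have hflip := hmax (flipPair ς i j) (flipPair_eq_one_or_neg_one hς i j)
    (by rw [prod_flipPair ς hij, hprod])
  rw [sum_flipPair_mul ς Δ hij] at hflip
  linarith
end

section
/- Let λ, μ > 0, α > 0, 0 < M with αM < π, and u_i, v_i ∈ S^{n_i - 1} with v_i ≠ -u_i, M^2 = Σ_i k_i ∠(u_i,v_i)^2. Define λ̇ = μ cos(αM) - λ and u̇_i = (v_i - ⟨u_i, v_i⟩u_i) · (μ sin(αM) ∠(u_i,v_i))/(λ α M sin(∠(u_i,v_i))) (interpreted as 0 when ∠(u_i,v_i)=0). Then (λ + λ̇)^2 + (αλN)^2 = μ^2, where N = sqrt(Σ_i k_i ‖u̇_i‖^2). -/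
open Finset Real
open scoped RealInnerProductSpace

/-!
The tangent vector `u̇ᵢ` is `c = μ sin(αM) / (λαM)` times the logarithm of the unit sphere at
`uᵢ` in the direction of `vᵢ`, and that logarithm has length `∠(uᵢ, vᵢ)`. Hence `N = cM`, so
`αλN = μ sin(αM)`, while `λ + λ̇ = μ cos(αM)`; the claim is `cos² + sin² = 1`.
-/

section SphereLog

variable {E : Type*} [NormedAddCommGroup E] [InnerProductSpace ℝ E]

lemma norm_sub_inner_smul_sq_of_norm_eq_one {u : E} (hu : ‖u‖ = 1) (v : E) :
    ‖v - ⟪u, v⟫ • u‖ ^ 2 = ‖v‖ ^ 2 - ⟪u, v⟫ ^ 2 := by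
  rw [norm_sub_sq_real, real_inner_smul_right, real_inner_comm u v, norm_smul, hu, norm_eq_abs,
    mul_one, sq_abs]
  ring

lemma norm_sub_inner_smul_eq_sin_arccos {u v : E} (hu : ‖u‖ = 1) (hv : ‖v‖ = 1) :
    ‖v - ⟪u, v⟫ • u‖ = sin (arccos ⟪u, v⟫) := by
  have hsq := norm_sub_inner_smul_sq_of_norm_eq_one hu v
  rw [hv, one_pow] at hsq
  rw [sin_arccos, ← hsq, sqrt_sq (norm_nonneg _)]

lemma arccos_inner_lt_pi {u v : E} (hu : ‖u‖ = 1) (hv : ‖v‖ = 1) (hne : v ≠ -u) :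
    arccos ⟪u, v⟫ < π := by
  refine (arccos_le_pi _).lt_of_ne fun hπ => hne ?_
  have hle : ⟪u, v⟫ ≤ -1 := arccos_eq_pi.mp hπ
  have hge : -1 ≤ ⟪u, v⟫ := by
    simpa [hu, hv] using neg_le_of_abs_le (abs_real_inner_le_norm u v)
  rw [← inner_eq_neg_one_iff_of_norm_eq_one (𝕜 := ℝ) hv hu, real_inner_comm]
  exact le_antisymm hle hge

/-- The vector on the left is the Riemannian logarithm of the unit sphere at `u`; at `v = u` the
junk value `0 / 0 = 0` correctly makes it zero. -/
lemma norm_arccos_div_sin_smul {u v : E} (hu : ‖u‖ = 1) (hv : ‖v‖ = 1) (hne : v ≠ -u) :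
    ‖(arccos ⟪u, v⟫ / sin (arccos ⟪u, v⟫)) • (v - ⟪u, v⟫ • u)‖ = arccos ⟪u, v⟫ := by
  have hθπ := arccos_inner_lt_pi hu hv hne
  set θ := arccos ⟪u, v⟫
  have hθ : 0 ≤ θ := arccos_nonneg _
  rw [norm_smul, norm_sub_inner_smul_eq_sin_arccos hu hv, norm_eq_abs]
  by_cases hsin : sin θ = 0
  · have hθ0 : θ = 0 := (sin_eq_zero_iff_of_lt_of_lt (by linarith [pi_pos]) hθπ).mp hsin
    simp [hθ0]
  · rw [abs_of_nonneg (div_nonneg hθ (sin_nonneg_of_nonneg_of_le_pi hθ hθπ.le)),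
      div_mul_cancel₀ _ hsin]

end SphereLog

theorem log_exp_radial_general (d : ℕ) (n : Fin d → ℕ) (k : Fin d → ℕ)
    (lam mu α M : ℝ) (hlam : 0 < lam) (hα : 0 < α)
    (hM : 0 < M)
    (u v : (i : Fin d) → EuclideanSpace ℝ (Fin (n i)))
    (hu : ∀ i, ‖u i‖ = 1) (hv : ∀ i, ‖v i‖ = 1) (hne : ∀ i, v i ≠ -u i)
    (hM2 : M ^ 2 = ∑ i, (k i : ℝ) * Real.arccos (inner ℝ (u i) (v i) : ℝ) ^ 2) :
    (lam + (mu * Real.cos (α * M) - lam)) ^ 2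
      + (α * lam * Real.sqrt (∑ i, (k i : ℝ) *
          ‖(mu * Real.sin (α * M) * Real.arccos (inner ℝ (u i) (v i) : ℝ)
              / (lam * α * M * Real.sin (Real.arccos (inner ℝ (u i) (v i) : ℝ)))) •
            (v i - (inner ℝ (u i) (v i) : ℝ) • u i)‖ ^ 2)) ^ 2
      = mu ^ 2 := by
  set c := mu * sin (α * M) / (lam * α * M) with hc
  have hterm : ∀ i, ‖(mu * sin (α * M) * arccos ⟪u i, v i⟫
      / (lam * α * M * sin (arccos ⟪u i, v i⟫))) • (v i - ⟪u i, v i⟫ • u i)‖ ^ 2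
      = c ^ 2 * arccos ⟪u i, v i⟫ ^ 2 := fun i => by
    rw [mul_div_mul_comm, mul_smul, norm_smul, norm_arccos_div_sin_smul (hu i) (hv i) (hne i),
      norm_eq_abs, mul_pow, sq_abs]
  have hsum : ∑ i, (k i : ℝ) * ‖(mu * sin (α * M) * arccos ⟪u i, v i⟫
      / (lam * α * M * sin (arccos ⟪u i, v i⟫))) • (v i - ⟪u i, v i⟫ • u i)‖ ^ 2
      = (c * M) ^ 2 := by
    simp_rw [hterm, mul_pow, hM2, mul_sum]
    exact sum_congr rfl fun i _ => by ring
  have hcM : α * lam * (c * M) = mu * sin (α * M) := by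
    rw [hc]
    field_simp
  rw [hsum, sqrt_sq_eq_abs, mul_pow, sq_abs, ← mul_pow, hcM]
  linear_combination mu ^ 2 * sin_sq_add_cos_sq (α * M)

/-- Verification that the logarithmic map of the α-warped pre-Segre–Veronese manifold
produces, via the exponential map formula, the correct radial coordinate:
`(λ + λ̇)² + (αλN)² = μ²`. -/
theorem log_exp_radial (d : ℕ) (n : Fin d → ℕ) (k : Fin d → ℕ) (hk : ∀ i, 1 ≤ k i)
    (lam mu α M : ℝ) (hlam : 0 < lam) (hmu : 0 < mu) (hα : 0 < α)
    (hM : 0 < M) (hMπ : α * M < π)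
    (u v : (i : Fin d) → EuclideanSpace ℝ (Fin (n i)))
    (hu : ∀ i, ‖u i‖ = 1) (hv : ∀ i, ‖v i‖ = 1) (hne : ∀ i, v i ≠ -u i)
    (hM2 : M ^ 2 = ∑ i, (k i : ℝ) * Real.arccos (inner ℝ (u i) (v i) : ℝ) ^ 2) :
    (lam + (mu * Real.cos (α * M) - lam)) ^ 2
      + (α * lam * Real.sqrt (∑ i, (k i : ℝ) *
          ‖(mu * Real.sin (α * M) * Real.arccos (inner ℝ (u i) (v i) : ℝ)
              / (lam * α * M * Real.sin (Real.arccos (inner ℝ (u i) (v i) : ℝ)))) •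
            (v i - (inner ℝ (u i) (v i) : ℝ) • u i)‖ ^ 2)) ^ 2
      = mu ^ 2 :=
  log_exp_radial_general d n k lam mu α M hlam hα hM u v hu hv hne hM2
end
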